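/- arXiv:2408.08812 — 3 statements merged into one kernel-verified Lean document; each statement's English description precedes it below -/
import Mathlib

section
/- Let D be a convex compact set of probability distributions over a finite set X, let r : X → ℝ be bounded, let ρ : D → ℝ be L-Lipschitz with respect to the L1 norm, and let c ≥ 0. Suppose d_RA ∈ D maximizes d ↦ ⟨d, r⟩ − c·ρ(d) over D, and d_RN ∈ D maximizes d ↦ ⟨d, r⟩ over D. Then |⟨d_RA, r⟩ − ⟨d_RN, r⟩| ≤ 2·L·c. -/
/-- The expected reward under a caution-regularized maximizer and under a
risk-neutral maximizer differ by at most `2 L c`. -/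
theorem risk_aware_risk_neutral_return_gap
    {X : Type*} [Fintype X]
    (D : Set (X → ℝ)) (hD_convex : Convex ℝ D) (hD_compact : IsCompact D)
    (hD_prob : ∀ d ∈ D, (∀ x, 0 ≤ d x) ∧ ∑ x : X, d x = 1)
    (r : X → ℝ)
    (ρ : (X → ℝ) → ℝ) (L : ℝ) (hL : 0 ≤ L)
    (hLip : ∀ d ∈ D, ∀ d' ∈ D, |ρ d - ρ d'| ≤ L * ∑ x : X, |d x - d' x|)
    (c : ℝ) (hc : 0 ≤ c)
    (dRA : X → ℝ) (hdRA_mem : dRA ∈ D)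
    (hdRA_max : ∀ d ∈ D, (∑ x : X, d x * r x) - c * ρ d ≤
      (∑ x : X, dRA x * r x) - c * ρ dRA)
    (dRN : X → ℝ) (hdRN_mem : dRN ∈ D)
    (hdRN_max : ∀ d ∈ D, (∑ x : X, d x * r x) ≤ ∑ x : X, dRN x * r x) :
    |(∑ x : X, dRA x * r x) - ∑ x : X, dRN x * r x| ≤ 2 * L * c := by
  have h1 := hdRN_max dRA hdRA_mem
  have h2 := hdRA_max dRN hdRN_mem
  -- gap ≥ 0
  have hgap : 0 ≤ (∑ x : X, dRN x * r x) - ∑ x : X, dRA x * r x := by linarith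
  -- L1 distance ≤ 2
  have hL1 : ∑ x : X, |dRN x - dRA x| ≤ 2 := by
    obtain ⟨hRN0, hRN1⟩ := hD_prob dRN hdRN_mem
    obtain ⟨hRA0, hRA1⟩ := hD_prob dRA hdRA_mem
    calc ∑ x : X, |dRN x - dRA x| ≤ ∑ x : X, (dRN x + dRA x) := by
          apply Finset.sum_le_sum
          intro x _
          rw [abs_sub_le_iff]
          constructor <;> [linarith [hRA0 x]; linarith [hRN0 x]]
      _ = 2 := by rw [Finset.sum_add_distrib, hRN1, hRA1]; norm_num
  have hlip := hLip dRN hdRN_mem dRA hdRA_mem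
  have hρ : ρ dRN - ρ dRA ≤ 2 * L := by
    have := le_trans (le_abs_self _) hlip
    nlinarith
  have hub : (∑ x : X, dRN x * r x) - ∑ x : X, dRA x * r x ≤ 2 * L * c := by
    nlinarith
  rw [abs_sub_comm, abs_of_nonneg hgap]
  exact hub
end

section
/- Fix a finite MDP with discount γ ∈ [0,1). For j = 1,…,n let π_j be deterministic policies with action-value functions Q^{π_j}, and let κ_j ∈ ℝ be constants (interpreted as c·ρ(d^{π_j})). Define Q_max(s,a) = max_j ( Q^{π_j}(s,a) − κ_j ), and define the policy π_i(s) ∈ argmax_b Q_max(s,b). Assume γ ≤ 1 and κ_j ≥ 0 for all j. Then the Bellman operator of π_i satisfies (T^{π_i} Q_max)(s,a) ≥ max_j ( Q^{π_j}(s,a) − κ_j ) = Q_max(s,a) for all (s,a). -/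
/-- The Bellman operator of the greedy composite policy improves on
`Q_max(s,a) = max_j (Q^{π_j}(s,a) − κ_j)` pointwise. -/
theorem bellman_improves_Qmax
    {S A : Type*} [Fintype S] [Fintype A] [Nonempty S] [Nonempty A]
    (p : S → A → S → ℝ)
    (hp_nonneg : ∀ s a s', 0 ≤ p s a s')
    (hp_sum : ∀ s a, ∑ s' : S, p s a s' = 1)
    (γ : ℝ) (hγ0 : 0 ≤ γ) (hγ1 : γ < 1)
    (r : S → A → ℝ)
    (n : ℕ) (hn : 0 < n)
    (πj : Fin n → S → A)
    (Q : Fin n → S → A → ℝ)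
    (hQ : ∀ j s a, Q j s a = r s a + γ * ∑ s' : S, p s a s' * Q j s' (πj j s'))
    (κ : Fin n → ℝ) (hκ : ∀ j, 0 ≤ κ j)
    (Qmax : S → A → ℝ)
    (hQmax : ∀ s a, Qmax s a = ⨆ j : Fin n, (Q j s a - κ j))
    (πi : S → A)
    (hπi_greedy : ∀ s b, Qmax s b ≤ Qmax s (πi s)) :
    ∀ s a, Qmax s a ≤ r s a + γ * ∑ s' : S, p s a s' * Qmax s' (πi s') := by
  intro s a
  haveI : Nonempty (Fin n) := ⟨⟨0, hn⟩⟩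
  rw [hQmax s a]
  apply ciSup_le
  intro j
  have key : ∀ s', Q j s' (πj j s') - κ j ≤ Qmax s' (πi s') := by
    intro s'
    calc Q j s' (πj j s') - κ j ≤ Qmax s' (πj j s') := by
          rw [hQmax]
          exact le_ciSup (f := fun k : Fin n => Q k s' (πj j s') - κ k) (Set.Finite.bddAbove (Set.finite_range _)) j
      _ ≤ Qmax s' (πi s') := hπi_greedy s' _
  have hsum : ∑ s' : S, p s a s' * Q j s' (πj j s')
      ≤ ∑ s' : S, p s a s' * (Qmax s' (πi s') + κ j) := by
    apply Finset.sum_le_sum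
    intro s' _
    apply mul_le_mul_of_nonneg_left _ (hp_nonneg s a s')
    linarith [key s']
  have hexp : ∑ s' : S, p s a s' * (Qmax s' (πi s') + κ j)
      = (∑ s' : S, p s a s' * Qmax s' (πi s')) + κ j := by
    simp [mul_add, Finset.sum_add_distrib, ← Finset.sum_mul, hp_sum s a]
  rw [hQ j s a]
  have hγκ : γ * κ j ≤ κ j := by nlinarith [hκ j]
  nlinarith [hsum, hexp, hκ j]
end

section
/- Under the setup of the previous statement (finite MDP, policies π_j with value functions Q^{π_j}, constants κ_j ≥ 0, Q_max(s,a) = max_j (Q^{π_j}(s,a) − κ_j), and π_i(s) ∈ argmax_b Q_max(s,b)), the action-value function Q^{π_i} of the greedy composite policy π_i satisfies Q^{π_i}(s,a) ≥ Q^{π_j}(s,a) − κ_j for all (s,a) and all j. -/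
/-- Generalized policy improvement with constant penalties: the value of the
greedy composite policy dominates each `Q^{π_j} − κ_j`. -/
theorem generalized_policy_improvement_with_penalty
    {S A : Type*} [Fintype S] [Fintype A] [Nonempty S] [Nonempty A]
    (p : S → A → S → ℝ)
    (hp_nonneg : ∀ s a s', 0 ≤ p s a s')
    (hp_sum : ∀ s a, ∑ s' : S, p s a s' = 1)
    (γ : ℝ) (hγ0 : 0 ≤ γ) (hγ1 : γ < 1)
    (r : S → A → ℝ)
    (n : ℕ) (hn : 0 < n)
    (πj : Fin n → S → A)
    (Q : Fin n → S → A → ℝ)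
    (hQ : ∀ j s a, Q j s a = r s a + γ * ∑ s' : S, p s a s' * Q j s' (πj j s'))
    (κ : Fin n → ℝ) (hκ : ∀ j, 0 ≤ κ j)
    (Qmax : S → A → ℝ)
    (hQmax : ∀ s a, Qmax s a = ⨆ j : Fin n, (Q j s a - κ j))
    (πi : S → A)
    (hπi_greedy : ∀ s b, Qmax s b ≤ Qmax s (πi s))
    (Qπi : S → A → ℝ)
    (hQπi : ∀ s a, Qπi s a = r s a + γ * ∑ s' : S, p s a s' * Qπi s' (πi s')) :
    ∀ s a, ∀ j : Fin n, Q j s a - κ j ≤ Qπi s a := by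
  haveI : Nonempty (Fin n) := ⟨⟨0, hn⟩⟩
  -- each Q j - κ j is below Qmax
  have hle_max : ∀ j s a, Q j s a - κ j ≤ Qmax s a := by
    intro j s a
    rw [hQmax]
    exact le_ciSup (Finite.bddAbove_range fun j => Q j s a - κ j) j
  -- Qmax satisfies a sub-Bellman inequality w.r.t. πi
  have hsub : ∀ s a, Qmax s a ≤ r s a + γ * ∑ s' : S, p s a s' * Qmax s' (πi s') := by
    intro s a
    rw [hQmax]
    apply ciSup_le
    intro j
    rw [hQ]
    have hsum : ∑ s' : S, p s a s' * Q j s' (πj j s')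
        ≤ ∑ s' : S, p s a s' * (Qmax s' (πi s') + κ j) := by
      apply Finset.sum_le_sum
      intro s' _
      apply mul_le_mul_of_nonneg_left _ (hp_nonneg s a s')
      have := hle_max j s' (πj j s')
      have := hπi_greedy s' (πj j s')
      linarith
    have hsum2 : ∑ s' : S, p s a s' * (Qmax s' (πi s') + κ j)
        = (∑ s' : S, p s a s' * Qmax s' (πi s')) + κ j := by
      simp [mul_add, Finset.sum_add_distrib, ← Finset.sum_mul, hp_sum s a]
    have hκj := hκ j
    nlinarith [mul_le_mul_of_nonneg_left hsum hγ0]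
  -- contraction argument on the max gap
  set D : S × A → ℝ := fun sa => Qmax sa.1 sa.2 - Qπi sa.1 sa.2 with hD
  have hne : (Finset.univ : Finset (S × A)).Nonempty := Finset.univ_nonempty
  set M : ℝ := Finset.univ.sup' hne D with hM
  have hDM : ∀ s a, D (s, a) ≤ M := fun s a => Finset.le_sup' D (Finset.mem_univ _)
  have hMγ : M ≤ γ * M := by
    apply Finset.sup'_le
    rintro ⟨s, a⟩ _
    have h1 := hsub s a
    have h2 := hQπi s a
    have h3 : ∑ s' : S, p s a s' * Qmax s' (πi s') - ∑ s' : S, p s a s' * Qπi s' (πi s')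
        ≤ ∑ s' : S, p s a s' * M := by
      rw [← Finset.sum_sub_distrib]
      apply Finset.sum_le_sum
      intro s' _
      rw [← mul_sub]
      exact mul_le_mul_of_nonneg_left (hDM s' (πi s')) (hp_nonneg s a s')
    rw [← Finset.sum_mul, hp_sum s a, one_mul] at h3
    have : D (s, a) ≤ γ * (∑ s' : S, p s a s' * Qmax s' (πi s')
        - ∑ s' : S, p s a s' * Qπi s' (πi s')) := by
      simp only [hD]
      nlinarith
    calc D (s, a) ≤ γ * (∑ s' : S, p s a s' * Qmax s' (πi s')
          - ∑ s' : S, p s a s' * Qπi s' (πi s')) := this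
      _ ≤ γ * M := mul_le_mul_of_nonneg_left h3 hγ0
  have hM0 : M ≤ 0 := by nlinarith
  intro s a j
  have h1 := hle_max j s a
  have h2 := hDM s a
  simp only [hD] at h2
  linarith
end
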